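/- arXiv:2207.06251 — 2 statements merged into one kernel-verified Lean document; each statement's English description precedes it below -/
import Mathlib

section
/- The Petersen graph is not apex: for every vertex v, the graph obtained by deleting v is nonplanar. -/
open SimpleGraph

/-- `H` is a minor of `G`: disjoint connected branch sets in `G`, one for each vertex of `H`,
with edges of `H` realized by edges of `G` between the corresponding branch sets. -/
def MinorOf {W V : Type*} (H : SimpleGraph W) (G : SimpleGraph V) : Prop :=
  ∃ f : W → Set V,
    (∀ w, (G.induce (f w)).Connected) ∧
    (Pairwise fun w w' => Disjoint (f w) (f w')) ∧
    (∀ w w', H.Adj w w' → ∃ a ∈ f w, ∃ b ∈ f w', G.Adj a b)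

/-- Planarity, via Wagner's theorem: no `K₅` minor and no `K₃,₃` minor. -/
def IsPlanar {V : Type*} (G : SimpleGraph V) : Prop :=
  ¬ MinorOf (completeGraph (Fin 5)) G ∧
  ¬ MinorOf (completeBipartiteGraph (Fin 3) (Fin 3)) G

/-- `M` is a maximal planar subgraph of `G`: `M` is planar, and inserting any edge of `G`
not in `M` into `M` yields a nonplanar graph. -/
def MaximalPlanarSubgraph {V : Type*} (G : SimpleGraph V) (M : G.Subgraph) : Prop :=
  IsPlanar M.coe ∧
  ∀ ⦃u v : V⦄ (h : G.Adj u v), ¬ M.Adj u v →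
    ¬ IsPlanar (M ⊔ G.subgraphOfAdj h).coe

/-- `G` contains a copy of `H` as a subgraph. -/
def ContainsSubgraph {W V : Type*} (H : SimpleGraph W) (G : SimpleGraph V) : Prop :=
  ∃ f : W → V, Function.Injective f ∧ ∀ a b, H.Adj a b → G.Adj (f a) (f b)


/-- The Petersen graph: vertices are 2-element subsets of a 5-element set,
adjacent iff disjoint. -/
def Petersen : SimpleGraph {s : Finset (Fin 5) // s.card = 2} where
  Adj a b := Disjoint a.1 b.1
  symm := ⟨fun _ _ h => h.symm⟩
  loopless := by
    constructor
    intro a h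
    have h1 : a.1 = ∅ := by simpa using disjoint_self.mp h
    have h2 := a.2
    rw [h1] at h2
    simp at h2

/-!
Permutations of `Fin 5` act on the Petersen graph by automorphisms, transitively on vertices,
so it suffices to delete the vertex `{0, 1}`. What remains has a `K₃,₃` minor: for
`{x, y, z} = {2, 3, 4}` contract each edge `{0, x}{y, z}`; the contracted vertex is adjacent to
`{1, y}` and `{1, z}` through `{0, x}`, and to `{1, x}` through `{y, z}`.
-/

open Function

theorem SimpleGraph.IsClique.induce_connected {V : Type*} {G : SimpleGraph V} {s : Set V}
    (hs : G.IsClique s) (hne : s.Nonempty) : (G.induce s).Connected := by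
  have : Nonempty s := hne.to_subtype
  rw [induce_eq_top.2 hs]
  exact connected_top

section MinorOf

variable {W V V' : Type*} {H : SimpleGraph W} {G : SimpleGraph V} {G' : SimpleGraph V'}

theorem MinorOf.map (f : G →g G') (hf : Injective f) (h : MinorOf H G) : MinorOf H G' := by
  obtain ⟨B, hconn, hdisj, hadj⟩ := h
  refine ⟨fun w => f '' B w, fun w => ?_,
    fun w w' hne => (Set.disjoint_image_iff hf).2 (hdisj hne), fun w w' hww' => ?_⟩
  · refine (hconn w).map (induceHom f (Set.mapsTo_image f (B w))) ?_
    rintro ⟨_, x, hx, rfl⟩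
    exact ⟨⟨x, hx⟩, rfl⟩
  · obtain ⟨a, ha, b, hb, hab⟩ := hadj w w' hww'
    exact ⟨f a, Set.mem_image_of_mem f ha, f b, Set.mem_image_of_mem f hb, f.map_adj hab⟩

theorem MinorOf.induce_compl_singleton_of_iso (e : G ≃g G') {v : V}
    (h : MinorOf H (G.induce {v}ᶜ)) : MinorOf H (G'.induce {e v}ᶜ) :=
  h.map (induceHom e.toHom fun _ hx => e.injective.ne hx)
    (induceHom_injective _ _ e.injective.injOn)

end MinorOf

namespace Petersen

abbrev Vertex := {s : Finset (Fin 5) // s.card = 2}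

@[simp]
theorem adj_iff {s t : Vertex} : Petersen.Adj s t ↔ Disjoint s.1 t.1 := Iff.rfl

instance : DecidableRel Petersen.Adj := fun _ _ => decidable_of_iff _ adj_iff.symm

def permIso (σ : Equiv.Perm (Fin 5)) : Petersen ≃g Petersen where
  toEquiv := σ.finsetCongr.subtypeEquiv fun s => by simp
  map_rel_iff' := by simp [Finset.disjoint_map]

theorem exists_iso_apply_eq (u v : Vertex) : ∃ e : Petersen ≃g Petersen, e u = v := by
  have := Set.powersetCard.isPretransitive (α := Fin 5) (n := 2)
  obtain ⟨σ, hσ⟩ := MulAction.exists_smul_eq (Equiv.Perm (Fin 5))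
    (⟨u.1, u.2⟩ : Set.powersetCard (Fin 5) 2) ⟨v.1, v.2⟩
  refine ⟨permIso σ, Subtype.ext ?_⟩
  simpa [permIso, Finset.map_eq_image, Finset.smul_finset_def] using congrArg Subtype.val hσ

def v₀ : Vertex := ⟨{0, 1}, rfl⟩

def k33Branch : Fin 3 ⊕ Fin 3 → Finset ↥({v₀}ᶜ : Set Vertex)
  | .inl i => {x | x.1.1 = {0, Fin.natAdd 2 i} ∨ x.1.1 = {0, 1, Fin.natAdd 2 i}ᶜ}
  | .inr i => {x | x.1.1 = {1, Fin.natAdd 2 i}}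

theorem k33Branch_isClique :
    ∀ w, (Petersen.induce {v₀}ᶜ).IsClique (k33Branch w : Set _) := by
  unfold SimpleGraph.IsClique Set.Pairwise
  decide

theorem k33Branch_nonempty : ∀ w, (k33Branch w).Nonempty := by
  decide

theorem k33Branch_pairwiseDisjoint :
    Pairwise fun w w' => Disjoint (k33Branch w) (k33Branch w') := by
  unfold Pairwise
  decide

theorem exists_adj_k33Branch : ∀ i j,
    ∃ a ∈ k33Branch (.inl i), ∃ b ∈ k33Branch (.inr j),
      (Petersen.induce {v₀}ᶜ).Adj a b := by
  decide

theorem minorOf_K33_induce_compl_v₀ :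
    MinorOf (completeBipartiteGraph (Fin 3) (Fin 3)) (Petersen.induce {v₀}ᶜ) := by
  refine ⟨fun w => k33Branch w,
    fun w => (k33Branch_isClique w).induce_connected (k33Branch_nonempty w),
    fun w w' hne => Finset.disjoint_coe.2 (k33Branch_pairwiseDisjoint hne), ?_⟩
  rintro (i | i) (j | j) h
  · simp at h
  · exact exists_adj_k33Branch i j
  · obtain ⟨a, ha, b, hb, hab⟩ := exists_adj_k33Branch j i
    exact ⟨b, hb, a, ha, hab.symm⟩
  · simp at h

end Petersen

/-- The Petersen graph is not apex: deleting any single vertex leaves a nonplanar graph. -/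
theorem petersen_not_apex (v : {s : Finset (Fin 5) // s.card = 2}) :
    ¬ IsPlanar (Petersen.induce ({v}ᶜ : Set {s : Finset (Fin 5) // s.card = 2})) := by
  obtain ⟨e, rfl⟩ := Petersen.exists_iso_apply_eq Petersen.v₀ v
  exact fun hplanar =>
    hplanar.2 (Petersen.minorOf_K33_induce_compl_v₀.induce_compl_singleton_of_iso e)
end

section
/- The complete tripartite graph K_{3,3,1} minus two nonadjacent edges between the parts {a,b,c} and {x,y,z} (e.g., minus (a,x) and (b,y)) is planar. -/
open SimpleGraph

/-- Partition function for `K_{3,3,1}`: vertex 0 is the singleton part,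
vertices 1,2,3 and 4,5,6 are the two parts of size 3. -/
def tpart : Fin 7 → Fin 3 := ![0, 1, 1, 1, 2, 2, 2]

/-- The complete tripartite graph `K_{3,3,1}` on parts {0}, {1,2,3}, {4,5,6}. -/
def K331 : SimpleGraph (Fin 7) where
  Adj i j := tpart i ≠ tpart j
  symm := ⟨fun _ _ h => Ne.symm h⟩
  loopless := ⟨fun _ h => h rfl⟩

/-! Vertex `0` is adjacent to every other vertex, and deleting it leaves the hexagon
`3 - 5 - 1 - 6 - 2 - 4` with the long diagonal `3 - 6`, an outerplanar graph. Branch sets are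
disjoint, so at most one branch set of a `K₅`- or `K₃,₃`-model contains `0`; dropping it leaves a
model of `K₄` or `K₂,₃` in the hexagon. Four (five) disjoint nonempty branch sets inside six
vertices have at most three (two) vertices each, which leaves few enough candidates for an
exhaustive search to rule out both models. -/

open Finset Function

theorem Finset.card_add_card_sub_one_le {ι α : Type*} [Fintype ι] [DecidableEq α]
    {s : ι → Finset α} {S : Finset α} (hsS : ∀ i, s i ⊆ S) (hs : Pairwise (Disjoint on s))
    (hne : ∀ i, (s i).Nonempty) (i : ι) : #(s i) + (Fintype.card ι - 1) ≤ #S := by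
  classical
  calc #(s i) + (Fintype.card ι - 1) = #(s i) + #(univ.erase i) • 1 := by
        simp [card_erase_of_mem]
    _ ≤ #(s i) + ∑ j ∈ univ.erase i, #(s j) := by
        gcongr; exact card_nsmul_le_sum _ _ _ fun j _ => (hne j).card_pos
    _ = ∑ j, #(s j) := add_sum_erase _ (fun j => #(s j)) (mem_univ i)
    _ = #(univ.biUnion s) := (card_biUnion fun j _ k _ h => hs h).symm
    _ ≤ #S := card_le_card (biUnion_subset.mpr fun j _ => hsS j)

theorem Pairwise.exists_forall_ne_notMem {ι α : Type*} [Nonempty ι] {s : ι → Set α}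
    (hs : Pairwise (Disjoint on s)) (a : α) : ∃ i₀, ∀ i ≠ i₀, a ∉ s i := by
  by_cases h : ∃ i₀, a ∈ s i₀
  · obtain ⟨i₀, hi₀⟩ := h
    exact ⟨i₀, fun i hi ha => Set.disjoint_left.mp (hs hi) ha hi₀⟩
  · exact ⟨Classical.arbitrary ι, fun i _ ha => h ⟨i, ha⟩⟩

namespace SimpleGraph

variable {V W W' : Type*} {G : SimpleGraph V} {H : SimpleGraph W} {H' : SimpleGraph W'}
  {f : W → Set V}

theorem exists_adj_of_induce_connected {s : Set V} (hs : (G.induce s).Connected) {u v : V}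
    (hu : u ∈ s) (hv : v ∈ s) (huv : u ≠ v) : ∃ x ∈ s, G.Adj v x := by
  obtain ⟨⟨x, hx⟩, hvx⟩ :=
    (hs.preconnected ⟨v, hv⟩ ⟨u, hu⟩).nonempty_neighborSet_left (by simpa using huv.symm)
  exact ⟨x, hx, hvx⟩

structure IsMinorModel (H : SimpleGraph W) (G : SimpleGraph V) (f : W → Set V) : Prop where
  connected : ∀ w, (G.induce (f w)).Connected
  pairwise_disjoint : Pairwise fun w w' => Disjoint (f w) (f w')
  exists_adj : ∀ w w', H.Adj w w' → ∃ a ∈ f w, ∃ b ∈ f w', G.Adj a b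

theorem minorOf_iff_exists_isMinorModel : MinorOf H G ↔ ∃ f, IsMinorModel H G f :=
  ⟨fun ⟨f, h₁, h₂, h₃⟩ => ⟨f, h₁, h₂, h₃⟩, fun ⟨f, h₁, h₂, h₃⟩ => ⟨f, h₁, h₂, h₃⟩⟩

def Linked (G : SimpleGraph V) (s t : Finset V) : Prop :=
  ∃ a ∈ s, ∃ b ∈ t, G.Adj a b

instance [DecidableEq V] [DecidableRel G.Adj] (s t : Finset V) : Decidable (G.Linked s t) :=
  inferInstanceAs (Decidable (∃ a ∈ s, ∃ b ∈ t, G.Adj a b))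

-- A decidable necessary condition on the branch sets, cheaper to evaluate than connectivity.
def branchCandidates [DecidableEq V] (G : SimpleGraph V) [DecidableRel G.Adj] (S : Finset V)
    (k : ℕ) : Finset (Finset V) :=
  S.powerset.filter fun s => s.Nonempty ∧ #s ≤ k ∧ ∀ v ∈ s, 1 < #s → ∃ x ∈ s, G.Adj v x

namespace IsMinorModel

theorem comp (hf : IsMinorModel H G f) {φ : H' →g H} (hφ : Injective φ) :
    IsMinorModel H' G (f ∘ φ) where
  connected w := hf.connected (φ w)
  pairwise_disjoint _ _ h := hf.pairwise_disjoint (hφ.ne h)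
  exists_adj _ _ h := hf.exists_adj _ _ (φ.map_adj h)

theorem exists_isMinorModel_forall_notMem [Nonempty W] (hf : IsMinorModel H G f) (v : V)
    (hH : ∀ w₀, ∃ φ : H' →g H, Injective φ ∧ ∀ x, φ x ≠ w₀) :
    ∃ f' : W' → Set V, IsMinorModel H' G f' ∧ ∀ x, v ∉ f' x := by
  obtain ⟨w₀, hw₀⟩ := hf.pairwise_disjoint.exists_forall_ne_notMem v
  obtain ⟨φ, hφ, hφw₀⟩ := hH w₀
  exact ⟨f ∘ φ, hf.comp hφ, fun x => hw₀ _ (hφw₀ x)⟩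

theorem exists_branchCandidates [Fintype W] [DecidableEq V] [DecidableRel G.Adj]
    (hf : IsMinorModel H G f) (S : Finset V) (hfS : ∀ w, f w ⊆ S) :
    ∃ g : W → Finset V, (∀ w, g w ∈ branchCandidates G S (#S + 1 - Fintype.card W)) ∧
      Pairwise (Disjoint on g) ∧ ∀ w w', H.Adj w w' → G.Linked (g w) (g w') := by
  classical
  set g : W → Finset V := fun w => S.filter (· ∈ f w)
  have mem_g {v w} : v ∈ g w ↔ v ∈ f w := by simpa [g] using fun h => hfS w h
  have hdisj : Pairwise (Disjoint on g) := fun w w' h =>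
    Finset.disjoint_left.mpr fun _ hv hv' => Set.disjoint_left.mp (hf.pairwise_disjoint h)
      (mem_g.mp hv) (mem_g.mp hv')
  have hne (w) : (g w).Nonempty := by
    obtain ⟨⟨v, hv⟩⟩ := (hf.connected w).nonempty
    exact ⟨v, mem_g.mpr hv⟩
  refine ⟨g, fun w => ?_, hdisj, fun w w' h => ?_⟩
  · have hcard := card_add_card_sub_one_le (s := g) (fun w => filter_subset _ S) hdisj hne w
    refine mem_filter.mpr ⟨mem_powerset.mpr (filter_subset _ S), hne w, by omega,
      fun v hv h => ?_⟩
    obtain ⟨u, hu, huv⟩ := exists_mem_ne h v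
    obtain ⟨x, hx, hvx⟩ :=
      exists_adj_of_induce_connected (hf.connected w) (mem_g.mp hu) (mem_g.mp hv) huv
    exact ⟨x, mem_g.mpr hx, hvx⟩
  · obtain ⟨a, ha, b, hb, hab⟩ := hf.exists_adj w w' h
    exact ⟨a, mem_g.mpr ha, b, mem_g.mpr hb, hab⟩

end IsMinorModel

theorem exists_completeGraph_hom_avoiding (n : ℕ) (w₀ : Fin (n + 1)) :
    ∃ φ : completeGraph (Fin n) →g completeGraph (Fin (n + 1)),
      Injective φ ∧ ∀ x, φ x ≠ w₀ :=
  ⟨(Embedding.completeGraph (Fin.succAboveEmb w₀)).toHom, Fin.succAbove_right_injective,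
    Fin.succAbove_ne w₀⟩

theorem exists_completeBipartiteGraph_hom_avoiding (n : ℕ) (w₀ : Fin (n + 1) ⊕ Fin (n + 1)) :
    ∃ φ : completeBipartiteGraph (Fin n) (Fin (n + 1)) →g
        completeBipartiteGraph (Fin (n + 1)) (Fin (n + 1)),
      Injective φ ∧ ∀ x, φ x ≠ w₀ := by
  rcases w₀ with i | j
  · refine ⟨⟨Sum.map i.succAbove id, ?_⟩, Sum.map_injective.mpr ⟨Fin.succAbove_right_injective,
      injective_id⟩, ?_⟩
    · rintro (a | a) (b | b) h <;> simp_all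
    · rintro (a | a) <;> simp [Fin.succAbove_ne]
  · refine ⟨⟨Sum.elim (Sum.inr ∘ j.succAbove) Sum.inl, ?_⟩, ?_, ?_⟩
    · rintro (a | a) (b | b) h <;> simp_all
    · rintro (a | a) (b | b) h <;> simp_all
    · rintro (a | a) <;> simp [Fin.succAbove_ne]

end SimpleGraph

instance : DecidableRel K331.Adj := fun i j => inferInstanceAs (Decidable (tpart i ≠ tpart j))

local notation "Γ" => K331.deleteEdges {s((1 : Fin 7), 4), s(2, 5)}

set_option synthInstance.maxSize 100000 in
theorem no_K4_branchCandidates :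
    ∀ a ∈ branchCandidates Γ (univ.erase 0) 3, ∀ b ∈ branchCandidates Γ (univ.erase 0) 3,
    Disjoint a b → Linked Γ a b →
    ∀ c ∈ branchCandidates Γ (univ.erase 0) 3, Disjoint a c → Disjoint b c →
    Linked Γ a c → Linked Γ b c →
    ∀ d ∈ branchCandidates Γ (univ.erase 0) 3, Disjoint a d → Disjoint b d → Disjoint c d →
    Linked Γ a d → Linked Γ b d → ¬ Linked Γ c d := by
  decide +kernel

set_option synthInstance.maxSize 100000 in
theorem no_K23_branchCandidates :
    ∀ a₁ ∈ branchCandidates Γ (univ.erase 0) 2, ∀ b₁ ∈ branchCandidates Γ (univ.erase 0) 2,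
    Disjoint a₁ b₁ → Linked Γ a₁ b₁ →
    ∀ b₂ ∈ branchCandidates Γ (univ.erase 0) 2, Disjoint a₁ b₂ → Disjoint b₁ b₂ →
    Linked Γ a₁ b₂ →
    ∀ b₃ ∈ branchCandidates Γ (univ.erase 0) 2, Disjoint a₁ b₃ → Disjoint b₁ b₃ →
    Disjoint b₂ b₃ → Linked Γ a₁ b₃ →
    ∀ a₂ ∈ branchCandidates Γ (univ.erase 0) 2, Disjoint a₁ a₂ → Disjoint a₂ b₁ →
    Disjoint a₂ b₂ → Disjoint a₂ b₃ → Linked Γ a₂ b₁ → Linked Γ a₂ b₂ → ¬ Linked Γ a₂ b₃ := by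
  decide +kernel

theorem not_isMinorModel_K4 {f : Fin 4 → Set (Fin 7)} (h0 : ∀ i, 0 ∉ f i) :
    ¬ IsMinorModel (completeGraph (Fin 4)) Γ f := by
  intro hf
  obtain ⟨g, hg, hdisj, hlink⟩ :=
    hf.exists_branchCandidates (univ.erase 0) fun i v hv => by
      simpa using ne_of_mem_of_not_mem hv (h0 i)
  have hlink' (i j : Fin 4) (h : i ≠ j := by decide) := hlink i j h
  exact no_K4_branchCandidates _ (hg 0) _ (hg 1) (hdisj (by decide)) (hlink' 0 1)
    _ (hg 2) (hdisj (by decide)) (hdisj (by decide)) (hlink' 0 2) (hlink' 1 2)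
    _ (hg 3) (hdisj (by decide)) (hdisj (by decide)) (hdisj (by decide))
    (hlink' 0 3) (hlink' 1 3) (hlink' 2 3)

theorem not_isMinorModel_K23 {f : Fin 2 ⊕ Fin 3 → Set (Fin 7)} (h0 : ∀ i, 0 ∉ f i) :
    ¬ IsMinorModel (completeBipartiteGraph (Fin 2) (Fin 3)) Γ f := by
  intro hf
  obtain ⟨g, hg, hdisj, hlink⟩ :=
    hf.exists_branchCandidates (univ.erase 0) fun i v hv => by
      simpa using ne_of_mem_of_not_mem hv (h0 i)
  have hlink' (i : Fin 2) (j : Fin 3) := hlink (.inl i) (.inr j) (by simp)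
  exact no_K23_branchCandidates _ (hg (.inl 0)) _ (hg (.inr 0)) (hdisj (by decide)) (hlink' 0 0)
    _ (hg (.inr 1)) (hdisj (by decide)) (hdisj (by decide)) (hlink' 0 1)
    _ (hg (.inr 2)) (hdisj (by decide)) (hdisj (by decide)) (hdisj (by decide)) (hlink' 0 2)
    _ (hg (.inl 1)) (hdisj (by decide)) (hdisj (by decide)) (hdisj (by decide)) (hdisj (by decide))
    (hlink' 1 0) (hlink' 1 1) (hlink' 1 2)

/-- `K_{3,3,1}` (parts `{0}`, `{1,2,3}`, `{4,5,6}`) minus two nonadjacent edges between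
the two parts of size 3 — here `(a,x) = (1,4)` and `(b,y) = (2,5)` — is planar. -/
theorem K331_minus_two_nonadjacent_edges_planar :
    IsPlanar (K331.deleteEdges {s((1 : Fin 7), 4), s(2, 5)}) := by
  refine ⟨fun h => ?_, fun h => ?_⟩ <;> obtain ⟨f, hf⟩ := minorOf_iff_exists_isMinorModel.mp h
  · obtain ⟨_, hf', h0⟩ := hf.exists_isMinorModel_forall_notMem 0
      (exists_completeGraph_hom_avoiding 4)
    exact not_isMinorModel_K4 h0 hf'
  · obtain ⟨_, hf', h0⟩ := hf.exists_isMinorModel_forall_notMem 0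
      (exists_completeBipartiteGraph_hom_avoiding 2)
    exact not_isMinorModel_K23 h0 hf'
end
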